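/- Let x* be feasible for (P): minimize q(x) := f(x)+g(x) subject to c(x) ∈ D (f, c continuously differentiable, g proper lsc, D nonempty closed). Suppose x* is AM-stationary and AM-regular. Then x* is M-stationary: there exists y* ∈ N^lim_D(c(x*)) with −∇c(x*)ᵀ y* ∈ ∂q(x*). -/

import Mathlib

/-!
A smooth summand shifts regular subgradients by its gradient, and passes to limiting
subgradients because `f` and `∇f` are continuous along attentive sequences; hence
`∂(f + g)(x) = ∇f(x) + ∂g(x)`. Subtracting `∇f` from the AM-stationarity residuals
`-∇c(xᵏ)ᵀyᵏ + ηᵏ ∈ ∂q(xᵏ)` puts `ηᵏ - ∇f(xᵏ)` into `M(xᵏ, -ζᵏ)`, and these converge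
to `-∇f(x*)` along a `g`-attentive sequence. AM-regularity places `-∇f(x*)` in `M(x*, 0)`,
which is M-stationarity once `∇f(x*)` is added back.
-/

open Metric Filter Topology
open scoped RealInnerProductSpace

noncomputable section

variable {E : Type*} [NormedAddCommGroup E] [InnerProductSpace ℝ E]

/-- The (possibly set-valued) metric projection onto `D`. -/
def projSet (D : Set E) (v : E) : Set E :=
  {z | z ∈ D ∧ ‖v - z‖ = Metric.infDist v D}

/-- The limiting (Mordukhovich) normal cone to `D` at `z`,
`N^lim_D(z) = limsup_{v → z} cone (v - proj_D v)`, empty outside `D`. -/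
def limNormalCone (D : Set E) (z : E) : Set E :=
  {w | z ∈ D ∧ ∃ (v : ℕ → E) (u : ℕ → E),
      Filter.Tendsto v Filter.atTop (nhds z) ∧
      Filter.Tendsto u Filter.atTop (nhds w) ∧
      ∀ k, ∃ (lam : ℝ) (p : E), 0 ≤ lam ∧ p ∈ projSet D (v k) ∧ u k = lam • (v k - p)}

/-- The regular (Fréchet) subdifferential of `h : E → ℝ ∪ {∞}` at `x`. -/
def RegSubdiff (h : E → WithTop ℝ) (x : E) : Set E :=
  {v | ∃ hx : ℝ, h x = (hx : WithTop ℝ) ∧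
    ∀ ε : ℝ, 0 < ε → ∀ᶠ y in nhds x,
      ((hx + (inner ℝ v (y - x) : ℝ) - ε * ‖y - x‖ : ℝ) : WithTop ℝ) ≤ h y}

/-- The limiting (Mordukhovich) subdifferential of `h` at `x`:
limits of regular subgradients along `h`-attentive sequences. -/
def LimSubdiff (h : E → WithTop ℝ) (x : E) : Set E :=
  {v | ∃ (xs : ℕ → E) (vs : ℕ → E) (hs : ℕ → ℝ) (hx : ℝ),
      h x = (hx : WithTop ℝ) ∧ (∀ k, h (xs k) = ((hs k : ℝ) : WithTop ℝ)) ∧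
      Filter.Tendsto xs Filter.atTop (nhds x) ∧
      Filter.Tendsto hs Filter.atTop (nhds hx) ∧
      Filter.Tendsto vs Filter.atTop (nhds v) ∧
      ∀ k, vs k ∈ RegSubdiff h (xs k)}

/-- The (possibly set-valued) proximal mapping of `h` with stepsize `γ`. -/
def proxSet (γ : ℝ) (h : E → WithTop ℝ) (x : E) : Set E :=
  {z | ∀ w : E, h z + ((‖z - x‖ ^ 2 / (2 * γ) : ℝ) : WithTop ℝ)
      ≤ h w + ((‖w - x‖ ^ 2 / (2 * γ) : ℝ) : WithTop ℝ)}

/-- The set `M(x,z) = ∂g(x) + ∇c(x)ᵀ N^lim_D(c(x) − z)`. -/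
def Mmap {n m : ℕ} (g : EuclideanSpace ℝ (Fin n) → WithTop ℝ)
    (c : EuclideanSpace ℝ (Fin n) → EuclideanSpace ℝ (Fin m))
    (D : Set (EuclideanSpace ℝ (Fin m)))
    (x : EuclideanSpace ℝ (Fin n)) (z : EuclideanSpace ℝ (Fin m)) :
    Set (EuclideanSpace ℝ (Fin n)) :=
  {η | ∃ a ∈ LimSubdiff g x, ∃ w ∈ limNormalCone D (c x - z),
        η = a + (ContinuousLinearMap.adjoint (fderiv ℝ c x)) w}



open scoped Gradient

lemma WithTop.eq_coe_sub_of_coe_add_eq {α : Type*} [AddCommGroup α] {a b : α} {t : WithTop α}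
    (h : (a : WithTop α) + t = b) : t = ↑(b - a) := by
  obtain ⟨a', r, ha, rfl, rfl⟩ := WithTop.add_eq_coe.mp h
  rw [WithTop.coe_inj.mp ha, add_sub_cancel_left]

section SmoothSumRule

variable [CompleteSpace E]

lemma ContDiff.continuous_gradient {f : E → ℝ} (hf : ContDiff ℝ 1 f) : Continuous (∇ f) :=
  (InnerProductSpace.toDual ℝ E).symm.continuous.comp (hf.continuous_fderiv one_ne_zero)

lemma regSubdiff_coe_add_of_hasGradientAt {f : E → ℝ} {f' x v : E} (hf : HasGradientAt f f' x)
    {g : E → WithTop ℝ} (hv : v ∈ RegSubdiff g x) :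
    f' + v ∈ RegSubdiff (fun y => (f y : WithTop ℝ) + g y) x := by
  obtain ⟨gx, hgx, hg⟩ := hv
  refine ⟨f x + gx, by simp only [hgx, WithTop.coe_add], fun ε hε => ?_⟩
  have hlin : ∀ᶠ y in 𝓝 x, |f y - f x - ⟪f', y - x⟫| ≤ ε / 2 * ‖y - x‖ := by
    simpa [InnerProductSpace.toDual_apply_apply] using hf.isLittleO.def (half_pos hε)
  filter_upwards [hg (ε / 2) (half_pos hε), hlin] with y hgy hfy
  revert hgy
  induction g y using WithTop.recTopCoe with
  | top => exact fun _ => le_top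
  | coe r =>
    intro hgy
    rw [WithTop.coe_le_coe] at hgy
    rw [← WithTop.coe_add, WithTop.coe_le_coe, inner_add_left]
    linarith [(abs_le.mp hfy).1]

lemma limSubdiff_coe_add {f : E → ℝ} {f' : E → E} (hf : ∀ y, HasGradientAt f (f' y) y)
    (hf' : Continuous f') {g : E → WithTop ℝ} {x v : E} (hv : v ∈ LimSubdiff g x) :
    f' x + v ∈ LimSubdiff (fun y => (f y : WithTop ℝ) + g y) x := by
  obtain ⟨xs, vs, gs, gx, hgx, hgs, hxs, hgst, hvs, hreg⟩ := hv
  have hfc : Continuous f := continuous_iff_continuousAt.mpr fun y =>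
    (hf y).differentiableAt.continuousAt
  refine ⟨xs, fun k => f' (xs k) + vs k, fun k => f (xs k) + gs k, f x + gx,
    by simp only [hgx, WithTop.coe_add], fun k => by simp only [hgs k, WithTop.coe_add], hxs,
    ((hfc.tendsto x).comp hxs).add hgst, ((hf'.tendsto x).comp hxs).add hvs,
    fun k => regSubdiff_coe_add_of_hasGradientAt (hf (xs k)) (hreg k)⟩

lemma limSubdiff_coe_add_iff {f : E → ℝ} (hf : ContDiff ℝ 1 f) {g : E → WithTop ℝ} {x v : E} :
    v ∈ LimSubdiff (fun y => (f y : WithTop ℝ) + g y) x ↔ v - ∇ f x ∈ LimSubdiff g x := by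
  have hgrad (y : E) : HasGradientAt f (∇ f y) y :=
    ((hf.differentiable one_ne_zero) y).hasGradientAt
  constructor
  · intro hv
    have hneg (y : E) : HasGradientAt (fun z => -f z) (-∇ f y) y := by
      rw [hasGradientAt_iff_hasFDerivAt, map_neg]
      exact (hgrad y).hasFDerivAt.neg
    have h := limSubdiff_coe_add hneg hf.continuous_gradient.neg hv
    have hcancel : (fun y => ((-f y : ℝ) : WithTop ℝ) + ((f y : WithTop ℝ) + g y)) = g := by
      funext y
      rw [← add_assoc, ← WithTop.coe_add, neg_add_cancel, WithTop.coe_zero, zero_add]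
    rwa [hcancel, neg_add_eq_sub] at h
  · intro hv
    simpa using limSubdiff_coe_add hgrad hf.continuous_gradient hv

end SmoothSumRule

lemma sub_gradient_mem_Mmap {n m : ℕ} {f : EuclideanSpace ℝ (Fin n) → ℝ} (hf : ContDiff ℝ 1 f)
    {g : EuclideanSpace ℝ (Fin n) → WithTop ℝ}
    {c : EuclideanSpace ℝ (Fin n) → EuclideanSpace ℝ (Fin m)} {D : Set (EuclideanSpace ℝ (Fin m))}
    {x η : EuclideanSpace ℝ (Fin n)} {y ζ : EuclideanSpace ℝ (Fin m)}
    (hη : -(ContinuousLinearMap.adjoint (fderiv ℝ c x)) y + η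
      ∈ LimSubdiff (fun x => (f x : WithTop ℝ) + g x) x)
    (hy : y ∈ limNormalCone D (c x + ζ)) :
    η - ∇ f x ∈ Mmap g c D x (-ζ) :=
  ⟨_, (limSubdiff_coe_add_iff hf).mp hη, y, by rwa [sub_neg_eq_add], by abel⟩

theorem stmt9_general {n m : ℕ} (f : EuclideanSpace ℝ (Fin n) → ℝ) (hf : ContDiff ℝ 1 f)
    (g : EuclideanSpace ℝ (Fin n) → WithTop ℝ)
    (c : EuclideanSpace ℝ (Fin n) → EuclideanSpace ℝ (Fin m))
    (D : Set (EuclideanSpace ℝ (Fin m)))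
    (q : EuclideanSpace ℝ (Fin n) → WithTop ℝ)
    (hq : q = fun x => ((f x : ℝ) : WithTop ℝ) + g x)
    (xstar : EuclideanSpace ℝ (Fin n))
    -- AM-stationarity of xstar
    (hAMstat : ∃ (xs ηs : ℕ → EuclideanSpace ℝ (Fin n)) (ys ζs : ℕ → EuclideanSpace ℝ (Fin m))
      (qs : ℕ → ℝ) (qstar : ℝ),
      q xstar = (qstar : WithTop ℝ) ∧ (∀ k, q (xs k) = ((qs k : ℝ) : WithTop ℝ)) ∧
      Filter.Tendsto xs Filter.atTop (nhds xstar) ∧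
      Filter.Tendsto qs Filter.atTop (nhds qstar) ∧
      Filter.Tendsto ηs Filter.atTop (nhds 0) ∧
      Filter.Tendsto ζs Filter.atTop (nhds 0) ∧
      ∀ k, (-(ContinuousLinearMap.adjoint (fderiv ℝ c (xs k))) (ys k) + ηs k
              ∈ LimSubdiff q (xs k)) ∧
           ys k ∈ limNormalCone D (c (xs k) + ζs k))
    -- AM-regularity of xstar
    (hAMreg : ∀ η : EuclideanSpace ℝ (Fin n),
      (∃ (xs : ℕ → EuclideanSpace ℝ (Fin n)) (zs : ℕ → EuclideanSpace ℝ (Fin m))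
         (ηs : ℕ → EuclideanSpace ℝ (Fin n)) (gs : ℕ → ℝ) (gstar : ℝ),
        g xstar = (gstar : WithTop ℝ) ∧ (∀ k, g (xs k) = ((gs k : ℝ) : WithTop ℝ)) ∧
        Filter.Tendsto xs Filter.atTop (nhds xstar) ∧
        Filter.Tendsto gs Filter.atTop (nhds gstar) ∧
        Filter.Tendsto zs Filter.atTop (nhds 0) ∧
        Filter.Tendsto ηs Filter.atTop (nhds η) ∧
        ∀ k, ηs k ∈ Mmap g c D (xs k) (zs k)) → η ∈ Mmap g c D xstar 0) :
    ∃ ystar ∈ limNormalCone D (c xstar),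
      -(ContinuousLinearMap.adjoint (fderiv ℝ c xstar)) ystar ∈ LimSubdiff q xstar := by
  subst hq
  obtain ⟨xs, ηs, ys, ζs, qs, qstar, hqx, hqs, hxs, hqst, hηt, hζt, hk⟩ := hAMstat
  have hfxs := (hf.continuous.tendsto xstar).comp hxs
  have hgradxs := (hf.continuous_gradient.tendsto xstar).comp hxs
  obtain ⟨a, ha, w, hw, heq⟩ : -∇ f xstar ∈ Mmap g c D xstar 0 :=
    hAMreg _ ⟨xs, fun k => -ζs k, fun k => ηs k - ∇ f (xs k), fun k => qs k - f (xs k),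
      qstar - f xstar, WithTop.eq_coe_sub_of_coe_add_eq hqx,
      fun k => WithTop.eq_coe_sub_of_coe_add_eq (hqs k), hxs, hqst.sub hfxs,
      by simpa using hζt.neg, by simpa using hηt.sub hgradxs,
      fun k => sub_gradient_mem_Mmap hf (hk k).1 (hk k).2⟩
  rw [sub_zero] at hw
  refine ⟨w, hw, (limSubdiff_coe_add_iff hf).mpr ?_⟩
  convert ha using 1
  rw [← neg_add_eq_sub, heq]
  abel

theorem stmt9 {n m : ℕ} (f : EuclideanSpace ℝ (Fin n) → ℝ) (hf : ContDiff ℝ 1 f)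
    (g : EuclideanSpace ℝ (Fin n) → WithTop ℝ)
    (hgproper : ∃ x, g x ≠ ⊤) (hglsc : LowerSemicontinuous g)
    (c : EuclideanSpace ℝ (Fin n) → EuclideanSpace ℝ (Fin m)) (hc : ContDiff ℝ 1 c)
    (D : Set (EuclideanSpace ℝ (Fin m))) (hDne : D.Nonempty) (hDcl : IsClosed D)
    (q : EuclideanSpace ℝ (Fin n) → WithTop ℝ)
    (hq : q = fun x => ((f x : ℝ) : WithTop ℝ) + g x)
    (xstar : EuclideanSpace ℝ (Fin n))
    (hfeas : g xstar ≠ ⊤ ∧ c xstar ∈ D)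
    -- AM-stationarity of xstar
    (hAMstat : ∃ (xs ηs : ℕ → EuclideanSpace ℝ (Fin n)) (ys ζs : ℕ → EuclideanSpace ℝ (Fin m))
      (qs : ℕ → ℝ) (qstar : ℝ),
      q xstar = (qstar : WithTop ℝ) ∧ (∀ k, q (xs k) = ((qs k : ℝ) : WithTop ℝ)) ∧
      Filter.Tendsto xs Filter.atTop (nhds xstar) ∧
      Filter.Tendsto qs Filter.atTop (nhds qstar) ∧
      Filter.Tendsto ηs Filter.atTop (nhds 0) ∧
      Filter.Tendsto ζs Filter.atTop (nhds 0) ∧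
      ∀ k, (-(ContinuousLinearMap.adjoint (fderiv ℝ c (xs k))) (ys k) + ηs k
              ∈ LimSubdiff q (xs k)) ∧
           ys k ∈ limNormalCone D (c (xs k) + ζs k))
    -- AM-regularity of xstar
    (hAMreg : ∀ η : EuclideanSpace ℝ (Fin n),
      (∃ (xs : ℕ → EuclideanSpace ℝ (Fin n)) (zs : ℕ → EuclideanSpace ℝ (Fin m))
         (ηs : ℕ → EuclideanSpace ℝ (Fin n)) (gs : ℕ → ℝ) (gstar : ℝ),
        g xstar = (gstar : WithTop ℝ) ∧ (∀ k, g (xs k) = ((gs k : ℝ) : WithTop ℝ)) ∧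
        Filter.Tendsto xs Filter.atTop (nhds xstar) ∧
        Filter.Tendsto gs Filter.atTop (nhds gstar) ∧
        Filter.Tendsto zs Filter.atTop (nhds 0) ∧
        Filter.Tendsto ηs Filter.atTop (nhds η) ∧
        ∀ k, ηs k ∈ Mmap g c D (xs k) (zs k)) → η ∈ Mmap g c D xstar 0) :
    ∃ ystar ∈ limNormalCone D (c xstar),
      -(ContinuousLinearMap.adjoint (fderiv ℝ c xstar)) ystar ∈ LimSubdiff q xstar :=
  stmt9_general f hf g c D q hq xstar hAMstat hAMreg
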